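/- The Choi operator of the qubit channel M_{1/2} = A_{1/2} ∘ Z_{1/2}, the composition of the amplitude damping channel with damping parameter 1/2 and the Z-dephasing channel with dephasing parameter 1/2, equals |0⟩⟨0| ⊗ |0⟩⟨0| + |1⟩⟨1| ⊗ (I/2); this operator is separable, and hence M_{1/2} is an entanglement-breaking channel. -/

import Mathlib

open scoped BigOperators Kronecker ComplexOrder
open Matrix MeasureTheory Filter

noncomputable section

abbrev Mat (n : ℕ) := Matrix (Fin n) (Fin n) ℂ

/-- A density matrix: positive semidefinite with unit trace. -/
def IsDensity {ι : Type} [Fintype ι] (ρ : Matrix ι ι ℂ) : Prop :=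
  ρ.PosSemidef ∧ ρ.trace = 1

/-- The trace norm ‖M‖₁ = tr √(MᴴM). -/
def traceNorm {ι : Type} [Fintype ι] [DecidableEq ι] (M : Matrix ι ι ℂ) : ℝ :=
  (((Matrix.posSemidef_conjTranspose_mul_self M).1.eigenvectorUnitary : Matrix ι ι ℂ)
    * Matrix.diagonal (((↑) : ℝ → ℂ) ∘ (√·) ∘ (Matrix.posSemidef_conjTranspose_mul_self M).1.eigenvalues)
    * (star (Matrix.posSemidef_conjTranspose_mul_self M).1.eigenvectorUnitary
      : Matrix ι ι ℂ)).trace.re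

/-- The rank-one operator |v⟩⟨v| associated to a vector. -/
def vecState {ι : Type} (v : ι → ℂ) : Matrix ι ι ℂ :=
  Matrix.of fun i j => v i * star (v j)

/-- Partial trace over the first tensor factor. -/
def ptraceLeft {R A : Type} [Fintype R] (M : Matrix (R × A) (R × A) ℂ) : Matrix A A ℂ :=
  Matrix.of fun a a' => ∑ r, M (r, a) (r, a')

/-- Partial trace over the second tensor factor. -/
def ptraceRight {A E : Type} [Fintype E] (M : Matrix (A × E) (A × E) ℂ) : Matrix A A ℂ :=
  Matrix.of fun a a' => ∑ e, M (a, e) (a', e)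

/-- The extension id_R ⊗ Φ of a linear map on matrices. -/
def idTensor {R A B : Type} (Φ : Matrix A A ℂ →ₗ[ℂ] Matrix B B ℂ) :
    Matrix (R × A) (R × A) ℂ →ₗ[ℂ] Matrix (R × B) (R × B) ℂ where
  toFun M := Matrix.of fun p q => Φ (Matrix.of fun a a' => M (p.1, a) (q.1, a')) p.2 q.2
  map_add' M N := by
    ext p q
    have h : (Matrix.of fun a a' => M (p.1, a) (q.1, a') + N (p.1, a) (q.1, a'))
        = (Matrix.of fun a a' => M (p.1, a) (q.1, a'))
          + (Matrix.of fun a a' => N (p.1, a) (q.1, a')) := by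
      ext a a'; simp [Matrix.add_apply]
    simp only [Matrix.of_apply, Matrix.add_apply]
    rw [h, map_add]
    simp [Matrix.add_apply]
  map_smul' c M := by
    ext p q
    have h : (Matrix.of fun a a' => c • M (p.1, a) (q.1, a'))
        = c • (Matrix.of fun a a' => M (p.1, a) (q.1, a')) := by
      ext a a'; simp [Matrix.smul_apply]
    simp only [Matrix.of_apply, Matrix.smul_apply]
    rw [h, Φ.map_smul]
    simp [Matrix.smul_apply]

/-- A linear map is completely positive and trace preserving (a quantum channel). -/
def IsCPTP {A B : Type} [Fintype A] [Fintype B] (Φ : Matrix A A ℂ →ₗ[ℂ] Matrix B B ℂ) : Prop :=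
  (∀ (r : ℕ) (M : Matrix (Fin r × A) (Fin r × A) ℂ), M.PosSemidef → (idTensor Φ M).PosSemidef)
    ∧ ∀ M : Matrix A A ℂ, (Φ M).trace = M.trace

/-- The tensor product Φ ⊗ Ψ of two linear maps on matrices. -/
def tensorMap {A B C D : Type} [Fintype A] [DecidableEq A] [Fintype C]
    (Φ : Matrix A A ℂ →ₗ[ℂ] Matrix B B ℂ) (Ψ : Matrix C C ℂ →ₗ[ℂ] Matrix D D ℂ) :
    Matrix (A × C) (A × C) ℂ →ₗ[ℂ] Matrix (B × D) (B × D) ℂ where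
  toFun M := Matrix.of fun p q => ∑ a : A, ∑ a' : A,
      Φ (Matrix.single a a' 1) p.1 q.1
        * Ψ (Matrix.of fun c c' => M (a, c) (a', c')) p.2 q.2
  map_add' M N := by
    ext p q
    have h : ∀ a a' : A, (Matrix.of fun c c' => M (a, c) (a', c') + N (a, c) (a', c'))
        = (Matrix.of fun c c' => M (a, c) (a', c'))
          + (Matrix.of fun c c' => N (a, c) (a', c')) := by
      intro a a'; ext c c'; simp [Matrix.add_apply]
    simp only [Matrix.of_apply, Matrix.add_apply]
    rw [← Finset.sum_add_distrib]
    refine Finset.sum_congr rfl fun a _ => ?_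
    rw [← Finset.sum_add_distrib]
    refine Finset.sum_congr rfl fun a' _ => ?_
    rw [h a a', map_add]
    simp [Matrix.add_apply, mul_add]
  map_smul' k M := by
    ext p q
    have h : ∀ a a' : A, (Matrix.of fun c c' => k * M (a, c) (a', c'))
        = k • (Matrix.of fun c c' => M (a, c) (a', c')) := by
      intro a a'; ext c c'; simp [Matrix.smul_apply, smul_eq_mul]
    simp only [Matrix.of_apply, Matrix.smul_apply, smul_eq_mul, RingHom.id_apply]
    rw [Finset.mul_sum]
    refine Finset.sum_congr rfl fun a _ => ?_
    rw [Finset.mul_sum]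
    refine Finset.sum_congr rfl fun a' _ => ?_
    rw [h a a', Ψ.map_smul]
    simp only [Matrix.smul_apply, smul_eq_mul]
    ring
  
/-- The n-fold tensor power Φ^{⊗n} of a linear map on matrices. -/
def powMap {A B : Type} [Fintype A] [DecidableEq A] [Fintype B] [DecidableEq B]
    (Φ : Matrix A A ℂ →ₗ[ℂ] Matrix B B ℂ) :
    (n : ℕ) → (Matrix (Fin n → A) (Fin n → A) ℂ →ₗ[ℂ] Matrix (Fin n → B) (Fin n → B) ℂ)
  | 0 => (Matrix.reindexLinearEquiv ℂ ℂ (Equiv.ofUnique (Fin 0 → A) (Fin 0 → B))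
      (Equiv.ofUnique (Fin 0 → A) (Fin 0 → B))).toLinearMap
  | (n + 1) =>
      (Matrix.reindexLinearEquiv ℂ ℂ (Fin.insertNthEquiv (fun _ => B) 0).symm.symm
          (Fin.insertNthEquiv (fun _ => B) 0).symm.symm).toLinearMap
        ∘ₗ tensorMap Φ (powMap Φ n)
        ∘ₗ (Matrix.reindexLinearEquiv ℂ ℂ (Fin.insertNthEquiv (fun _ => A) 0).symm
          (Fin.insertNthEquiv (fun _ => A) 0).symm).toLinearMap

open scoped Classical in
/-- The von Neumann entropy (base 2), via the eigenvalues of a Hermitian matrix. -/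
def vnEntropy {ι : Type} [Fintype ι] [DecidableEq ι] (ρ : Matrix ι ι ℂ) : ℝ :=
  if h : ρ.IsHermitian then ∑ i, -(h.eigenvalues i * Real.logb 2 (h.eigenvalues i)) else 0

/-- The function g(ε) = (1+ε)log₂(1+ε) − ε log₂ ε (with the convention 0·log 0 = 0). -/
def gfun (x : ℝ) : ℝ := (1 + x) * Real.logb 2 (1 + x) - x * Real.logb 2 x

/-- A finite ensemble of density matrices. -/
structure Ensemble (A : Type) [Fintype A] where
  m : ℕ
  p : Fin m → ℝ
  p_nonneg : ∀ i, 0 ≤ p i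
  p_sum : ∑ i, p i = 1
  ρ : Fin m → Matrix A A ℂ
  ρ_density : ∀ i, IsDensity (ρ i)

/-- A finite ensemble of pure states, given by unit vectors. -/
structure PureEnsemble (A : Type) [Fintype A] where
  m : ℕ
  p : Fin m → ℝ
  p_nonneg : ∀ i, 0 ≤ p i
  p_sum : ∑ i, p i = 1
  v : Fin m → (A → ℂ)
  pure : ∀ i, IsDensity (vecState (v i))

/-- The Holevo information of a (channel given as a) linear map. -/
def holevoMap {A B : Type} [Fintype A] [Fintype B] [DecidableEq B]
    (Φ : Matrix A A ℂ →ₗ[ℂ] Matrix B B ℂ) : ℝ :=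
  ⨆ e : Ensemble A,
    (vnEntropy (Φ (∑ i, (e.p i : ℂ) • e.ρ i)) - ∑ i, e.p i * vnEntropy (Φ (e.ρ i)))

/-- The classical capacity: the regularized Holevo information. -/
def classicalCapacity {A B : Type} [Fintype A] [DecidableEq A] [Fintype B] [DecidableEq B]
    (Φ : Matrix A A ℂ →ₗ[ℂ] Matrix B B ℂ) : ℝ :=
  Filter.limsup (fun n : ℕ => holevoMap (powMap Φ n) / (n : ℝ)) Filter.atTop

/-- Half the diamond norm of the difference of two maps:
the supremum over reference sizes and density inputs of half the output trace distance. -/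
def diamondDist {A B : Type} [Fintype A] [Fintype B] [DecidableEq B]
    (Φ Ψ : Matrix A A ℂ →ₗ[ℂ] Matrix B B ℂ) : ℝ :=
  ⨆ r : ℕ, ⨆ ρ : {ρ : Matrix (Fin r × A) (Fin r × A) ℂ // IsDensity ρ},
    (1 / 2) * traceNorm (idTensor Φ ρ.1 - idTensor Ψ ρ.1)

/-- The diamond norm of the difference of two maps (without the factor 1/2). -/
def diamondDistFull {A B : Type} [Fintype A] [Fintype B] [DecidableEq B]
    (Φ Ψ : Matrix A A ℂ →ₗ[ℂ] Matrix B B ℂ) : ℝ :=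
  ⨆ r : ℕ, ⨆ ρ : {ρ : Matrix (Fin r × A) (Fin r × A) ℂ // IsDensity ρ},
    traceNorm (idTensor Φ ρ.1 - idTensor Ψ ρ.1)

/-- Conjugation ρ ↦ W ρ Wᴴ as a linear map. -/
def conjMap {ι κ : Type} [Fintype ι] [Fintype κ] (W : Matrix κ ι ℂ) :
    Matrix ι ι ℂ →ₗ[ℂ] Matrix κ κ ℂ where
  toFun ρ := W * ρ * Wᴴ
  map_add' ρ σ := by simp [Matrix.mul_add, Matrix.add_mul]
  map_smul' c ρ := by simp [Matrix.mul_smul, Matrix.smul_mul]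

/-- A classical–quantum state ∑ₓ p(x) |x⟩⟨x| ⊗ ρ(x). -/
def cqState {X ι : Type} [DecidableEq X] (p : X → ℝ) (ρ : X → Matrix ι ι ℂ) :
    Matrix (X × ι) (X × ι) ℂ :=
  Matrix.of fun a b => if a.1 = b.1 then (p a.1 : ℂ) * ρ a.1 a.2 b.2 else 0

/-- A generalized divergence: a family of real functionals on pairs of matrices, one for each
finite-dimensional system, satisfying the data-processing inequality under quantum channels. -/
structure GenDivergence where
  D : ∀ {ι : Type} [Fintype ι] [DecidableEq ι], Matrix ι ι ℂ → Matrix ι ι ℂ → ℝ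
  data_proc : ∀ {ι κ : Type} [Fintype ι] [DecidableEq ι] [Fintype κ] [DecidableEq κ]
      (Λ : Matrix ι ι ℂ →ₗ[ℂ] Matrix κ κ ℂ), IsCPTP Λ →
      ∀ ρ σ : Matrix ι ι ℂ, IsDensity ρ → σ.PosSemidef → D (Λ ρ) (Λ σ) ≤ D ρ σ

/-- The direct-sum property of a generalized divergence on classical–quantum states. -/
def HasDirectSum (𝒟 : GenDivergence) : Prop :=
  ∀ {X ι : Type} [Fintype X] [DecidableEq X] [Fintype ι] [DecidableEq ι]
    (p : X → ℝ), (∀ x, 0 ≤ p x) → (∑ x, p x) = 1 →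
    ∀ (ρ σ : X → Matrix ι ι ℂ), (∀ x, IsDensity (ρ x)) → (∀ x, IsDensity (σ x)) →
    𝒟.D (cqState p ρ) (cqState p σ) = ∑ x, p x * 𝒟.D (ρ x) (σ x)

/-- The generalized channel divergence: optimization over pure inputs with reference R ≅ A. -/
def chanDiv (𝒟 : GenDivergence) {A B : Type} [Fintype A] [DecidableEq A]
    [Fintype B] [DecidableEq B] (Φ Ψ : Matrix A A ℂ →ₗ[ℂ] Matrix B B ℂ) : ℝ :=
  ⨆ v : {v : A × A → ℂ // IsDensity (vecState v)},
    𝒟.D (idTensor Φ (vecState v.1)) (idTensor Ψ (vecState v.1))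

/-- The maximally entangled state on A ⊗ A. -/
def maxEnt (A : Type) [Fintype A] [DecidableEq A] : Matrix (A × A) (A × A) ℂ :=
  vecState (fun p => if p.1 = p.2 then (((Real.sqrt (Fintype.card A))⁻¹ : ℝ) : ℂ) else 0)

/-- The Choi operator of a linear map on matrices. -/
def choi {A B : Type} [Fintype A] [DecidableEq A]
    (Φ : Matrix A A ℂ →ₗ[ℂ] Matrix B B ℂ) : Matrix (A × B) (A × B) ℂ :=
  idTensor Φ (Matrix.of fun p q => if p.1 = p.2 ∧ q.1 = q.2 then 1 else 0)

/-- Separability of a bipartite operator: a finite sum of tensor products of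
positive semidefinite operators. -/
def IsSepState {A B : Type} [Fintype A] [Fintype B]
    (M : Matrix (A × B) (A × B) ℂ) : Prop :=
  ∃ (k : ℕ) (P : Fin k → Matrix A A ℂ) (Q : Fin k → Matrix B B ℂ),
    (∀ i, (P i).PosSemidef) ∧ (∀ i, (Q i).PosSemidef) ∧ M = ∑ i, P i ⊗ₖ Q i

/-- An entanglement-breaking channel: a channel whose Choi operator is separable. -/
def IsEBChannel {A B : Type} [Fintype A] [DecidableEq A] [Fintype B]
    (Φ : Matrix A A ℂ →ₗ[ℂ] Matrix B B ℂ) : Prop :=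
  IsCPTP Φ ∧ IsSepState (choi Φ)

/-- φ is a purification (with reference system R on the left) of the state ρ. -/
def IsPurification {R A : Type} [Fintype R] [Fintype A]
    (φ : Matrix (R × A) (R × A) ℂ) (ρ : Matrix A A ℂ) : Prop :=
  (∃ v : R × A → ℂ, φ = vecState v) ∧ IsDensity φ ∧ ptraceLeft φ = ρ

/-- The channel ρ ↦ tr_E (V ρ Vᴴ) induced by an isometry V : A → B ⊗ E. -/
def dilMap {A B E : Type} [Fintype A] [Fintype B] [Fintype E]
    (V : Matrix (B × E) A ℂ) : Matrix A A ℂ →ₗ[ℂ] Matrix B B ℂ where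
  toFun ρ := ptraceRight (V * ρ * Vᴴ)
  map_add' ρ σ := by
    ext a a'
    simp [ptraceRight, Matrix.mul_add, Matrix.add_mul, Matrix.add_apply,
      Finset.sum_add_distrib]
  map_smul' c ρ := by
    ext a a'
    simp [ptraceRight, Matrix.mul_smul, Matrix.smul_mul, Matrix.smul_apply,
      Finset.mul_sum, smul_eq_mul]

/-- The complementary channel ρ ↦ tr_B (V ρ Vᴴ) induced by an isometry V : A → B ⊗ E. -/
def complMap {A B E : Type} [Fintype A] [Fintype B] [Fintype E]
    (V : Matrix (B × E) A ℂ) : Matrix A A ℂ →ₗ[ℂ] Matrix E E ℂ where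
  toFun ρ := ptraceLeft (V * ρ * Vᴴ)
  map_add' ρ σ := by
    ext a a'
    simp [ptraceLeft, Matrix.mul_add, Matrix.add_mul, Matrix.add_apply,
      Finset.sum_add_distrib]
  map_smul' c ρ := by
    ext a a'
    simp [ptraceLeft, Matrix.mul_smul, Matrix.smul_mul, Matrix.smul_apply,
      Finset.mul_sum, smul_eq_mul]

/-- A Hadamard channel: some Stinespring dilation has entanglement-breaking complement. -/
def IsHadamardChan {A B : Type} [Fintype A] [DecidableEq A] [Fintype B] [DecidableEq B]
    (Φ : Matrix A A ℂ →ₗ[ℂ] Matrix B B ℂ) : Prop :=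
  ∃ (e : ℕ) (V : Matrix (B × Fin e) A ℂ), Vᴴ * V = 1 ∧
    (∀ ρ, Φ ρ = ptraceRight (V * ρ * Vᴴ)) ∧ IsSepState (choi (complMap V))

/-- Covariance of a channel with respect to unitary representations of a group. -/
def CovariantChan {G A B : Type} [Group G] [Fintype A] [DecidableEq A]
    [Fintype B] [DecidableEq B]
    (U : G →* Matrix.unitaryGroup A ℂ) (V : G →* Matrix.unitaryGroup B ℂ)
    (Φ : Matrix A A ℂ →ₗ[ℂ] Matrix B B ℂ) : Prop :=
  ∀ (g : G) (ρ : Matrix A A ℂ),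
    (V g : Matrix B B ℂ) * Φ ρ * (V g : Matrix B B ℂ)ᴴ
      = Φ ((U g : Matrix A A ℂ) * ρ * (U g : Matrix A A ℂ)ᴴ)

/-- A unitary 1-design: averaging over the group sends every matrix to tr(ρ)·I/d. -/
def IsOneDesign {G A : Type} [Group G] [Fintype G] [Fintype A] [DecidableEq A]
    (U : G →* Matrix.unitaryGroup A ℂ) : Prop :=
  ∀ ρ : Matrix A A ℂ,
    (Fintype.card G : ℂ)⁻¹ • ∑ g, (U g : Matrix A A ℂ) * ρ * (U g : Matrix A A ℂ)ᴴ
      = (ρ.trace * (Fintype.card A : ℂ)⁻¹) • (1 : Matrix A A ℂ)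

/-- Pauli X. -/
def σX : Mat 2 := !![0, 1; 1, 0]
/-- Pauli Y. -/
def σY : Mat 2 := !![0, -Complex.I; Complex.I, 0]
/-- Pauli Z. -/
def σZ : Mat 2 := !![1, 0; 0, -1]

/-- The Pauli twirl of a qubit channel. -/
def pauliTwirl (Φ : Mat 2 →ₗ[ℂ] Mat 2) : Mat 2 →ₗ[ℂ] Mat 2 :=
  ((4 : ℂ)⁻¹) • (Φ + conjMap σX ∘ₗ Φ ∘ₗ conjMap σX + conjMap σY ∘ₗ Φ ∘ₗ conjMap σY
    + conjMap σZ ∘ₗ Φ ∘ₗ conjMap σZ)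

/-- The amplitude damping channel with damping parameter p. -/
def ampDamp (p : ℝ) : Mat 2 →ₗ[ℂ] Mat 2 :=
  conjMap (!![1, 0; 0, ((Real.sqrt (1 - p) : ℝ) : ℂ)] : Mat 2)
    + conjMap (!![0, ((Real.sqrt p : ℝ) : ℂ); 0, 0] : Mat 2)

/-- The qubit depolarizing channel with parameter p. -/
def depol (p : ℝ) : Mat 2 →ₗ[ℂ] Mat 2 :=
  (((1 - p : ℝ) : ℂ)) • LinearMap.id
    + (((p / 3 : ℝ) : ℂ)) • (conjMap σX + conjMap σY + conjMap σZ)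

/-- The Z-dephasing channel with parameter p. -/
def deph (p : ℝ) : Mat 2 →ₗ[ℂ] Mat 2 :=
  (((1 - p : ℝ) : ℂ)) • LinearMap.id + ((p : ℝ) : ℂ) • conjMap σZ

/-- The entanglement-breaking parameter: distance to the nearest EB channel. -/
def ebParam {A B : Type} [Fintype A] [DecidableEq A] [Fintype B] [DecidableEq B]
    (Φ : Matrix A A ℂ →ₗ[ℂ] Matrix B B ℂ) : ℝ :=
  ⨅ M : {M : Matrix A A ℂ →ₗ[ℂ] Matrix B B ℂ // IsEBChannel M}, diamondDist Φ M.1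

end

/-! Dephasing with parameter 1/2 erases the off-diagonal entries, and amplitude damping maps
diagonal matrices to diagonal matrices, so `A_p ∘ Z_{1/2}` sends `X` to
`diag(X₀₀ + p X₁₁, (1 - p) X₁₁)`. Its Choi operator is then
`|0⟩⟨0| ⊗ |0⟩⟨0| + |1⟩⟨1| ⊗ diag(p, 1 - p)`, a sum of products of positive operators, for every
`p ∈ [0, 1]`; complete positivity of both channels comes from their Kraus forms. -/

section Channels

variable {R A B C : Type}

lemma idTensor_add (Φ Ψ : Matrix A A ℂ →ₗ[ℂ] Matrix B B ℂ) (M : Matrix (R × A) (R × A) ℂ) :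
    idTensor (Φ + Ψ) M = idTensor Φ M + idTensor Ψ M := rfl

lemma idTensor_smul (c : ℂ) (Φ : Matrix A A ℂ →ₗ[ℂ] Matrix B B ℂ)
    (M : Matrix (R × A) (R × A) ℂ) : idTensor (c • Φ) M = c • idTensor Φ M := rfl

lemma idTensor_id (M : Matrix (R × A) (R × A) ℂ) :
    idTensor (LinearMap.id : Matrix A A ℂ →ₗ[ℂ] Matrix A A ℂ) M = M := rfl

lemma idTensor_conjMap [Fintype R] [DecidableEq R] [Fintype A] [Fintype B] (K : Matrix B A ℂ)
    (M : Matrix (R × A) (R × A) ℂ) :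
    idTensor (conjMap K) M = ((1 : Matrix R R ℂ) ⊗ₖ K) * M * ((1 : Matrix R R ℂ) ⊗ₖ K)ᴴ := by
  ext ⟨r, b⟩ ⟨r', b'⟩
  simp [idTensor, conjMap, Matrix.mul_apply, Fintype.sum_prod_type, Matrix.one_apply,
    Finset.sum_mul, mul_comm, apply_ite (starRingEnd ℂ), mul_ite]

lemma Matrix.PosSemidef.idTensor_conjMap [Fintype R] [DecidableEq R] [Fintype A] [Fintype B]
    (K : Matrix B A ℂ) {M : Matrix (R × A) (R × A) ℂ} (hM : M.PosSemidef) :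
    (idTensor (conjMap K) M).PosSemidef := by
  rw [_root_.idTensor_conjMap]
  exact hM.mul_mul_conjTranspose_same _

lemma IsCPTP.comp [Fintype A] [Fintype B] [Fintype C] {Φ : Matrix B B ℂ →ₗ[ℂ] Matrix C C ℂ}
    {Ψ : Matrix A A ℂ →ₗ[ℂ] Matrix B B ℂ} (hΦ : IsCPTP Φ) (hΨ : IsCPTP Ψ) :
    IsCPTP (Φ ∘ₗ Ψ) :=
  ⟨fun r M hM => hΦ.1 r _ (hΨ.1 r M hM), fun M => (hΦ.2 _).trans (hΨ.2 M)⟩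

lemma choi_apply [Fintype A] [DecidableEq A] (Φ : Matrix A A ℂ →ₗ[ℂ] Matrix B B ℂ)
    (a a' : A) (b b' : B) : choi Φ (a, b) (a', b') = Φ (Matrix.single a a' 1) b b' := by
  have : (Matrix.of fun x y => if a = x ∧ a' = y then (1 : ℂ) else 0) = Matrix.single a a' 1 := by
    ext x y
    simp [Matrix.single_apply]
  simp only [choi, idTensor, LinearMap.coe_mk, AddHom.coe_mk, Matrix.of_apply, this]

end Channels

section Separable

variable {A B : Type} [Fintype A] [Fintype B]

lemma isSepState_kronecker {P : Matrix A A ℂ} {Q : Matrix B B ℂ} (hP : P.PosSemidef)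
    (hQ : Q.PosSemidef) : IsSepState (P ⊗ₖ Q) :=
  ⟨1, fun _ => P, fun _ => Q, fun _ => hP, fun _ => hQ, by simp⟩

lemma IsSepState.add {M N : Matrix (A × B) (A × B) ℂ} (hM : IsSepState M) (hN : IsSepState N) :
    IsSepState (M + N) := by
  obtain ⟨k, P, Q, hP, hQ, rfl⟩ := hM
  obtain ⟨l, P', Q', hP', hQ', rfl⟩ := hN
  refine ⟨k + l, Fin.append P P', Fin.append Q Q', fun i => ?_, fun i => ?_, ?_⟩
  · induction i using Fin.addCases <;> simp [hP, hP']
  · induction i using Fin.addCases <;> simp [hQ, hQ']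
  · simp [Fin.sum_univ_add]

end Separable

section Qubit

lemma posSemidef_fin_two_diag {a b : ℂ} (ha : 0 ≤ a) (hb : 0 ≤ b) :
    (!![a, 0; 0, b] : Mat 2).PosSemidef := by
  have h : (Matrix.diagonal ![a, b]).PosSemidef :=
    Matrix.posSemidef_diagonal_iff.mpr fun i => by fin_cases i <;> assumption
  simpa [Matrix.diagonal_fin_two] using h

lemma deph_apply (q : ℝ) (X : Mat 2) :
    deph q X = !![X 0 0, (1 - 2 * q) * X 0 1; (1 - 2 * q) * X 1 0, X 1 1] := by
  ext i j
  fin_cases i <;> fin_cases j <;>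
    simp [deph, conjMap, σZ, Matrix.mul_apply, Matrix.vecMul, dotProduct, Fin.sum_univ_two] <;>
    ring

lemma ampDamp_apply {p : ℝ} (hp0 : 0 ≤ p) (hp1 : p ≤ 1) (Y : Mat 2) :
    ampDamp p Y = !![Y 0 0 + p * Y 1 1, (√(1 - p) : ℝ) * Y 0 1;
      (√(1 - p) : ℝ) * Y 1 0, (1 - p) * Y 1 1] := by
  have hs : ((√(1 - p) : ℝ) : ℂ) * (√(1 - p) : ℝ) = 1 - p := by
    rw [← Complex.ofReal_mul, Real.mul_self_sqrt (by linarith)]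
    push_cast
    ring
  have ht : ((√p : ℝ) : ℂ) * (√p : ℝ) = p := by
    rw [← Complex.ofReal_mul, Real.mul_self_sqrt hp0]
  ext i j
  fin_cases i <;> fin_cases j <;>
    simp [ampDamp, conjMap, Matrix.mul_apply, Matrix.vecMul, dotProduct, Fin.sum_univ_two] <;>
    first
      | ring1
      | linear_combination Y 1 1 * ht
      | linear_combination Y 1 1 * hs

lemma isCPTP_ampDamp {p : ℝ} (hp0 : 0 ≤ p) (hp1 : p ≤ 1) : IsCPTP (ampDamp p) := by
  refine ⟨fun r M hM => ?_, fun M => ?_⟩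
  · rw [ampDamp, idTensor_add]
    exact (hM.idTensor_conjMap _).add (hM.idTensor_conjMap _)
  · simp [ampDamp_apply hp0 hp1, Matrix.trace_fin_two]
    ring

lemma isCPTP_deph {q : ℝ} (hq0 : 0 ≤ q) (hq1 : q ≤ 1) : IsCPTP (deph q) := by
  refine ⟨fun r M hM => ?_, fun M => ?_⟩
  · rw [deph, idTensor_add, idTensor_smul, idTensor_smul, idTensor_id]
    exact (hM.smul (Complex.zero_le_real.mpr (by linarith))).add
      ((hM.idTensor_conjMap _).smul (Complex.zero_le_real.mpr hq0))
  · simp [deph_apply, Matrix.trace_fin_two]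

lemma ampDamp_comp_deph_half_apply {p : ℝ} (hp0 : 0 ≤ p) (hp1 : p ≤ 1) (X : Mat 2) :
    (ampDamp p ∘ₗ deph (1 / 2)) X = !![X 0 0 + p * X 1 1, 0; 0, (1 - p) * X 1 1] := by
  rw [LinearMap.comp_apply, deph_apply, ampDamp_apply hp0 hp1]
  norm_num

lemma choi_ampDamp_comp_deph_half_eq {p : ℝ} (hp0 : 0 ≤ p) (hp1 : p ≤ 1) :
    choi (ampDamp p ∘ₗ deph (1 / 2))
      = (!![1, 0; 0, 0] : Mat 2) ⊗ₖ (!![1, 0; 0, 0] : Mat 2)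
        + (!![0, 0; 0, 1] : Mat 2) ⊗ₖ (!![(p : ℂ), 0; 0, 1 - p] : Mat 2) := by
  ext ⟨i, j⟩ ⟨k, l⟩
  rw [choi_apply, ampDamp_comp_deph_half_apply hp0 hp1]
  fin_cases i <;> fin_cases k <;> fin_cases j <;> fin_cases l <;> simp

lemma isSepState_choi_ampDamp_comp_deph_half {p : ℝ} (hp0 : 0 ≤ p) (hp1 : p ≤ 1) :
    IsSepState (choi (ampDamp p ∘ₗ deph (1 / 2))) := by
  have hp0' : (0 : ℂ) ≤ p := Complex.zero_le_real.mpr hp0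
  have hp1' : (0 : ℂ) ≤ 1 - p := by exact_mod_cast Complex.zero_le_real.mpr (sub_nonneg.mpr hp1)
  rw [choi_ampDamp_comp_deph_half_eq hp0 hp1]
  exact (isSepState_kronecker (posSemidef_fin_two_diag zero_le_one le_rfl)
      (posSemidef_fin_two_diag zero_le_one le_rfl)).add
    (isSepState_kronecker (posSemidef_fin_two_diag le_rfl zero_le_one)
      (posSemidef_fin_two_diag hp0' hp1'))

end Qubit

/-- The Choi operator of M_{1/2} = A_{1/2} ∘ Z_{1/2} equals
|0⟩⟨0|⊗|0⟩⟨0| + |1⟩⟨1|⊗(I/2); it is separable, and hence M_{1/2} is entanglement-breaking. -/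
theorem choi_ampDamp_comp_deph_half :
    choi (ampDamp (1 / 2) ∘ₗ deph (1 / 2))
        = (!![1, 0; 0, 0] : Mat 2) ⊗ₖ (!![1, 0; 0, 0] : Mat 2)
          + (!![0, 0; 0, 1] : Mat 2) ⊗ₖ ((2 : ℂ)⁻¹ • (1 : Mat 2)) ∧
      IsSepState (choi (ampDamp (1 / 2) ∘ₗ deph (1 / 2))) ∧
      IsEBChannel (ampDamp (1 / 2) ∘ₗ deph (1 / 2)) := by
  have hp0 : (0 : ℝ) ≤ 1 / 2 := by norm_num
  have hp1 : (1 / 2 : ℝ) ≤ 1 := by norm_num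
  have hsep := isSepState_choi_ampDamp_comp_deph_half hp0 hp1
  refine ⟨?_, hsep, (isCPTP_ampDamp hp0 hp1).comp (isCPTP_deph hp0 hp1), hsep⟩
  rw [choi_ampDamp_comp_deph_half_eq hp0 hp1, Matrix.one_fin_two, Matrix.smul_of]
  norm_num
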